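/- arXiv:0809.2974 — 8 statements merged into one kernel-verified Lean document; each statement's English description precedes it below -/
import Mathlib

section
/- If p* ∈ Δ minimizes J on Δ and all coordinates of p* are positive, then there exist constants C > 0 and ρ > 0 such that p*_i = C e^{-β E_i} ρ^i for all i = 0,…,D. -/
/-!
Along any direction `v` with `∑ vᵢ = 0` and `∑ i vᵢ = 0` the point `p* + t v` stays in `Δ` for
small `t`, because `p*` has positive coordinates. Minimality makes `t ↦ J(p* + t v)` stationary
at `0`, so `v ↦ ∑ (log p*ᵢ + β Eᵢ) vᵢ` vanishes on the common kernel of the two constraint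
functionals. By linear duality it is a combination of them (Lagrange multipliers), i.e.
`log p*ᵢ + β Eᵢ = a + b i`, and exponentiating gives `p*ᵢ = eᵃ e^{-β Eᵢ} (eᵇ)ⁱ`.
-/

open Real Finset Filter Topology

variable {ι : Type*} [Fintype ι]

theorem exists_eq_add_mul_of_sum_mul_eq_zero {𝕜 : Type*} [Field 𝕜] {c g : ι → 𝕜}
    (h : ∀ v : ι → 𝕜, ∑ i, v i = 0 → ∑ i, c i * v i = 0 → ∑ i, g i * v i = 0) :
    ∃ a b : 𝕜, ∀ i, g i = a + b * c i := by
  classical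
  have hker : ⨅ k, LinearMap.ker (![Fintype.linearCombination 𝕜 (fun _ => (1 : 𝕜)),
      Fintype.linearCombination 𝕜 c] k) ≤ LinearMap.ker (Fintype.linearCombination 𝕜 g) := by
    intro v hv
    simp only [Submodule.mem_iInf, Fin.forall_fin_two, LinearMap.mem_ker] at hv
    simp_all [Fintype.linearCombination_apply, mul_comm]
  obtain ⟨r, hr⟩ :=
    (Submodule.mem_span_range_iff_exists_fun 𝕜).1 (mem_span_of_iInf_ker_le_ker hker)
  refine ⟨r 0, r 1, fun i => ?_⟩
  have hri := LinearMap.congr_fun hr (Pi.single i 1)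
  simpa [Fin.sum_univ_two, Fintype.linearCombination_apply, Pi.single_apply] using hri.symm

noncomputable def freeEnergy (β : ℝ) (E p : ι → ℝ) : ℝ :=
  (∑ i, p i * log (p i)) + β * ∑ i, p i * E i

def momentSimplex (c : ι → ℝ) (m : ℝ) : Set (ι → ℝ) :=
  {p | (∀ i, p i ∈ Set.Icc (0 : ℝ) 1) ∧ (∑ i, p i = 1) ∧ (∑ i, c i * p i = m)}

theorem mem_momentSimplex_of_pos {c p : ι → ℝ} {m : ℝ} (hp : ∀ i, 0 < p i)
    (hsum : ∑ i, p i = 1) (hmoment : ∑ i, c i * p i = m) : p ∈ momentSimplex c m := by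
  refine ⟨fun i => ⟨(hp i).le, ?_⟩, hsum, hmoment⟩
  exact hsum ▸ single_le_sum (fun j _ => (hp j).le) (mem_univ i)

theorem eventually_add_smul_mem_momentSimplex {c p v : ι → ℝ} {m : ℝ} (hp : ∀ i, 0 < p i)
    (hpm : p ∈ momentSimplex c m) (hv : ∑ i, v i = 0) (hcv : ∑ i, c i * v i = 0) :
    ∀ᶠ t in 𝓝 (0 : ℝ), p + t • v ∈ momentSimplex c m := by
  have hpos : ∀ᶠ t in 𝓝 (0 : ℝ), ∀ i, 0 < p i + t * v i := by
    refine eventually_all.2 fun i => ?_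
    have hcont : Continuous fun t : ℝ => p i + t * v i := by fun_prop
    exact continuousAt_const.eventually_lt hcont.continuousAt (by simpa using hp i)
  filter_upwards [hpos] with t ht
  refine mem_momentSimplex_of_pos (by simpa using ht) ?_ ?_
  · simp [sum_add_distrib, ← mul_sum, hv, hpm.2.1]
  · simp [mul_add, mul_left_comm _ t, sum_add_distrib, ← mul_sum, hcv, hpm.2.2]

theorem hasDerivAt_freeEnergy_add_smul (β : ℝ) (E : ι → ℝ) {p : ι → ℝ} (v : ι → ℝ)
    (hp : ∀ i, p i ≠ 0) :
    HasDerivAt (fun t : ℝ => freeEnergy β E (p + t • v))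
      (∑ i, (log (p i) + 1 + β * E i) * v i) 0 := by
  have hline : ∀ i, HasDerivAt (fun t : ℝ => p i + t * v i) (v i) 0 := fun i => by
    simpa using ((hasDerivAt_id (0 : ℝ)).mul_const (v i)).const_add (p i)
  have hent : ∀ i, HasDerivAt (fun t : ℝ => (p i + t * v i) * log (p i + t * v i))
      ((log (p i) + 1) * v i) 0 := fun i => by
    simpa [Function.comp_def] using
      (Real.hasDerivAt_mul_log (by simpa using hp i)).comp (0 : ℝ) (hline i)
  have hsum := (HasDerivAt.fun_sum (u := univ) fun i _ => hent i).add
    ((HasDerivAt.fun_sum (u := univ) fun i _ => (hline i).mul_const (E i)).const_mul β)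
  have hval : ∑ i, (log (p i) + 1 + β * E i) * v i
      = ∑ i, (log (p i) + 1) * v i + β * ∑ i, v i * E i := by
    rw [mul_sum, ← sum_add_distrib]; exact sum_congr rfl fun i _ => by ring
  rw [hval]
  exact hsum

theorem IsMinOn.sum_log_add_mul_eq_zero {β m : ℝ} {E c p v : ι → ℝ}
    (hmin : IsMinOn (freeEnergy β E) (momentSimplex c m) p) (hpm : p ∈ momentSimplex c m)
    (hp : ∀ i, 0 < p i) (hv : ∑ i, v i = 0) (hcv : ∑ i, c i * v i = 0) :
    ∑ i, (log (p i) + β * E i) * v i = 0 := by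
  have hloc : IsLocalMin (fun t : ℝ => freeEnergy β E (p + t • v)) 0 := by
    filter_upwards [eventually_add_smul_mem_momentSimplex hp hpm hv hcv] with t ht
    simpa using hmin ht
  have hcrit := hloc.hasDerivAt_eq_zero (hasDerivAt_freeEnergy_add_smul β E v fun i => (hp i).ne')
  calc ∑ i, (log (p i) + β * E i) * v i
      = ∑ i, (log (p i) + 1 + β * E i) * v i - ∑ i, v i := by
        rw [← sum_sub_distrib]; exact sum_congr rfl fun i _ => by ring
    _ = 0 := by rw [hcrit, hv, sub_zero]

theorem IsMinOn.exists_eq_exp_mul_exp_mul_exp {β m : ℝ} {E c p : ι → ℝ}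
    (hmin : IsMinOn (freeEnergy β E) (momentSimplex c m) p) (hpm : p ∈ momentSimplex c m)
    (hp : ∀ i, 0 < p i) :
    ∃ a b : ℝ, ∀ i, p i = exp a * exp (-β * E i) * exp (b * c i) := by
  obtain ⟨a, b, hab⟩ := exists_eq_add_mul_of_sum_mul_eq_zero (g := fun i => log (p i) + β * E i)
    fun v hv hcv => hmin.sum_log_add_mul_eq_zero hpm hp hv hcv
  refine ⟨a, b, fun i => ?_⟩
  rw [← exp_add, ← exp_add, ← exp_log (hp i)]
  congr 1
  linarith [hab i]

theorem minimizer_has_exponential_form_general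
    (D : ℕ) (E : Fin (D + 1) → ℝ) (β : ℝ)
    (Δ : Set (Fin (D + 1) → ℝ))
    (hΔ : Δ = {p : Fin (D + 1) → ℝ | (∀ i, p i ∈ Set.Icc (0 : ℝ) 1) ∧
        (∑ i, p i = 1) ∧ (∑ i, (i.1 : ℝ) * p i = 1)})
    (J : (Fin (D + 1) → ℝ) → ℝ)
    (hJ : J = fun p => (∑ i, p i * Real.log (p i)) + β * ∑ i, p i * E i)
    (pstar : Fin (D + 1) → ℝ)
    (hmem : pstar ∈ Δ) (hmin : IsMinOn J Δ pstar)
    (hpos : ∀ i, 0 < pstar i) :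
    ∃ C > (0 : ℝ), ∃ ρ > (0 : ℝ), ∀ i : Fin (D + 1),
      pstar i = C * Real.exp (-β * E i) * ρ ^ (i.1 : ℕ) := by
  change Δ = momentSimplex (fun i => (i.1 : ℝ)) 1 at hΔ
  change J = freeEnergy β E at hJ
  subst hΔ hJ
  obtain ⟨a, b, hab⟩ := hmin.exists_eq_exp_mul_exp_mul_exp hmem hpos
  refine ⟨exp a, exp_pos a, exp b, exp_pos b, fun i => ?_⟩
  rw [hab i, ← exp_nat_mul, mul_comm b]

/-- If p* ∈ Δ minimizes J on Δ and has all coordinates positive,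
then there exist C > 0 and ρ > 0 with p*_i = C e^{-βE_i} ρ^i for all i. -/
theorem minimizer_has_exponential_form
    (D : ℕ) (hD : 2 ≤ D) (E : Fin (D + 1) → ℝ) (β : ℝ)
    (Δ : Set (Fin (D + 1) → ℝ))
    (hΔ : Δ = {p : Fin (D + 1) → ℝ | (∀ i, p i ∈ Set.Icc (0 : ℝ) 1) ∧
        (∑ i, p i = 1) ∧ (∑ i, (i.1 : ℝ) * p i = 1)})
    (J : (Fin (D + 1) → ℝ) → ℝ)
    (hJ : J = fun p => (∑ i, p i * Real.log (p i)) + β * ∑ i, p i * E i)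
    (pstar : Fin (D + 1) → ℝ)
    (hmem : pstar ∈ Δ) (hmin : IsMinOn J Δ pstar)
    (hpos : ∀ i, 0 < pstar i) :
    ∃ C > (0 : ℝ), ∃ ρ > (0 : ℝ), ∀ i : Fin (D + 1),
      pstar i = C * Real.exp (-β * E i) * ρ ^ (i.1 : ℕ) :=
  minimizer_has_exponential_form_general D E β Δ hΔ J hJ pstar hmem hmin hpos
end

section
/- There exists a unique ρ > 0 satisfying ∑_{i=0}^D e^{-β E_i} ρ^i = ∑_{i=0}^D i e^{-β E_i} ρ^i. -/
open Real Finset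

/-- There exists a unique ρ > 0 with
∑_{i=0}^D e^{-βE_i} ρ^i = ∑_{i=0}^D i e^{-βE_i} ρ^i. -/
theorem exists_unique_rho
    (D : ℕ) (hD : 2 ≤ D) (E : Fin (D + 1) → ℝ) (β : ℝ) :
    ∃! ρ : ℝ, 0 < ρ ∧
      ∑ i : Fin (D + 1), Real.exp (-β * E i) * ρ ^ (i.1 : ℕ)
        = ∑ i : Fin (D + 1), (i.1 : ℝ) * Real.exp (-β * E i) * ρ ^ (i.1 : ℕ) := by
  set a : Fin (D + 1) → ℝ := fun i => Real.exp (-β * E i) with ha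
  have hapos : ∀ i, 0 < a i := fun i => Real.exp_pos _
  set f : ℝ → ℝ := fun ρ => ∑ i : Fin (D + 1), ((i.1 : ℝ) - 1) * a i * ρ ^ (i.1 : ℕ)
    with hf
  have key : ∀ ρ : ℝ,
      ((∑ i : Fin (D + 1), a i * ρ ^ (i.1 : ℕ)
        = ∑ i : Fin (D + 1), (i.1 : ℝ) * a i * ρ ^ (i.1 : ℕ)) ↔ f ρ = 0) := by
    intro ρ
    have : f ρ = (∑ i : Fin (D + 1), (i.1 : ℝ) * a i * ρ ^ (i.1 : ℕ))
        - ∑ i : Fin (D + 1), a i * ρ ^ (i.1 : ℕ) := by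
      rw [hf, ← Finset.sum_sub_distrib]
      exact Finset.sum_congr rfl (fun i _ => by ring)
    rw [this, sub_eq_zero, eq_comm]
  -- strict monotonicity on [0, ∞)
  have hmono : StrictMonoOn f (Set.Ici (0 : ℝ)) := by
    intro x hx y _ hxy
    apply Finset.sum_lt_sum
    · intro i _
      rcases Nat.eq_zero_or_pos i.1 with h0 | h1
      · simp [h0]
      · have hc : (0 : ℝ) ≤ (i.1 : ℝ) - 1 := by
          have : (1 : ℝ) ≤ (i.1 : ℝ) := by exact_mod_cast h1
          linarith
        have : x ^ (i.1 : ℕ) ≤ y ^ (i.1 : ℕ) :=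
          pow_le_pow_left₀ hx hxy.le _
        have := mul_le_mul_of_nonneg_left this
          (mul_nonneg hc (hapos i).le)
        linarith [this]
    · refine ⟨Fin.last D, Finset.mem_univ _, ?_⟩
      have hval : ((Fin.last D).1 : ℕ) = D := rfl
      have hc : (0 : ℝ) < ((Fin.last D).1 : ℝ) - 1 := by
        rw [hval]
        have : (2 : ℝ) ≤ (D : ℝ) := by exact_mod_cast hD
        linarith
      have hpow : x ^ D < y ^ D :=
        pow_lt_pow_left₀ hxy hx (by omega)
      rw [hval]
      exact mul_lt_mul_of_pos_left hpow
        (mul_pos (by simpa [hval] using hc) (hapos _)) |>.trans_le le_rfl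
  -- value at 0
  have hf0 : f 0 = -a 0 := by
    simp only [hf]
    rw [Finset.sum_eq_single (0 : Fin (D + 1))]
    · norm_num
    · intro i _ hi
      have : i.1 ≠ 0 := fun h => hi (Fin.ext h)
      simp [zero_pow this]
    · simp
  have hf0neg : f 0 < 0 := by rw [hf0]; linarith [hapos 0]
  -- large point
  set M : ℝ := max 1 ((a (Fin.last D))⁻¹ * a 0) with hM
  have hM1 : (1 : ℝ) ≤ M := le_max_left _ _
  have hM0 : (0 : ℝ) ≤ M := by linarith
  have hfM : 0 ≤ f M := by
    have hDne : (Fin.last D) ≠ (0 : Fin (D + 1)) := by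
      intro h
      have := congrArg Fin.val h
      simp [Fin.last] at this
      omega
    have hmem : Fin.last D ∈ (Finset.univ.erase (0 : Fin (D + 1))) :=
      Finset.mem_erase.mpr ⟨hDne, Finset.mem_univ _⟩
    have hsplit : f M = ((0 : ℝ) - 1) * a 0 * M ^ (0 : ℕ)
        + ∑ i ∈ Finset.univ.erase (0 : Fin (D + 1)),
            ((i.1 : ℝ) - 1) * a i * M ^ (i.1 : ℕ) := by
      simp only [hf]
      rw [← Finset.add_sum_erase _ _ (Finset.mem_univ (0 : Fin (D + 1)))]
      norm_num
    have hterms : ∀ i ∈ Finset.univ.erase (0 : Fin (D + 1)),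
        0 ≤ ((i.1 : ℝ) - 1) * a i * M ^ (i.1 : ℕ) := by
      intro i hi
      have hi0 : i.1 ≠ 0 := fun h => (Finset.mem_erase.mp hi).1 (Fin.ext h)
      have h1 : (1 : ℝ) ≤ (i.1 : ℝ) := by
        exact_mod_cast Nat.one_le_iff_ne_zero.mpr hi0
      exact mul_nonneg (mul_nonneg (by linarith) (hapos i).le) (pow_nonneg hM0 _)
    have hsingle : ((Fin.last D).1 : ℝ) * a (Fin.last D) * M ^ ((Fin.last D).1 : ℕ)
        - a (Fin.last D) * M ^ ((Fin.last D).1 : ℕ) ≤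
        ∑ i ∈ Finset.univ.erase (0 : Fin (D + 1)),
          ((i.1 : ℝ) - 1) * a i * M ^ (i.1 : ℕ) := by
      have := Finset.single_le_sum hterms hmem
      calc _ = ((Fin.last D).1 - 1 : ℝ) * a (Fin.last D) * M ^ ((Fin.last D).1 : ℕ) := by ring
      _ ≤ _ := this
    have hval : ((Fin.last D).1 : ℕ) = D := rfl
    -- lower bound on the D term
    have hDterm : a 0 ≤ ((D : ℝ) - 1) * a (Fin.last D) * M ^ D := by
      have hpowM : M ≤ M ^ D := by
        calc M = M ^ 1 := (pow_one M).symm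
        _ ≤ M ^ D := pow_le_pow_right₀ hM1 (by omega)
      have haM : a 0 ≤ a (Fin.last D) * M := by
        have h2 : (a (Fin.last D))⁻¹ * a 0 ≤ M := le_max_right _ _
        have := mul_le_mul_of_nonneg_left h2 (hapos (Fin.last D)).le
        rwa [← mul_assoc, mul_inv_cancel₀ (hapos (Fin.last D)).ne', one_mul] at this
      have h1D : (1 : ℝ) ≤ (D : ℝ) - 1 := by
        have : (2 : ℝ) ≤ (D : ℝ) := by exact_mod_cast hD
        linarith
      calc a 0 ≤ a (Fin.last D) * M := haM
      _ ≤ a (Fin.last D) * M ^ D :=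
          mul_le_mul_of_nonneg_left hpowM (hapos _).le
      _ = 1 * (a (Fin.last D) * M ^ D) := (one_mul _).symm
      _ ≤ ((D : ℝ) - 1) * (a (Fin.last D) * M ^ D) := by
          apply mul_le_mul_of_nonneg_right h1D
          exact mul_nonneg (hapos _).le (pow_nonneg hM0 _)
      _ = ((D : ℝ) - 1) * a (Fin.last D) * M ^ D := by ring
    have hbig : a 0 ≤ ∑ i ∈ Finset.univ.erase (0 : Fin (D + 1)),
        ((i.1 : ℝ) - 1) * a i * M ^ (i.1 : ℕ) := by
      refine le_trans ?_ hsingle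
      rw [hval]
      nlinarith [hDterm]
    rw [hsplit]
    norm_num
    linarith
  -- continuity
  have hcont : ContinuousOn f (Set.Icc (0 : ℝ) M) := by
    apply Continuous.continuousOn
    apply continuous_finset_sum
    intro i _
    exact (continuous_const.mul (continuous_pow _))
  -- IVT
  have hIVT := intermediate_value_Icc hM0 hcont
  have h0mem : (0 : ℝ) ∈ Set.Icc (f 0) (f M) := ⟨hf0neg.le, hfM⟩
  obtain ⟨c, hc, hfc⟩ := hIVT h0mem
  have hcpos : 0 < c := by
    rcases lt_or_eq_of_le hc.1 with h | h
    · exact h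
    · exfalso; rw [← h] at hfc; rw [hfc] at hf0neg; exact lt_irrefl 0 hf0neg
  refine ⟨c, ⟨hcpos, (key c).mpr hfc⟩, ?_⟩
  intro y ⟨hy, hyeq⟩
  exact hmono.injOn (Set.mem_Ici.mpr hy.le) (Set.mem_Ici.mpr hcpos.le)
    (by rw [(key y).mp hyeq, hfc])
end

section
/- Define transition kernel on ℕ≥1 by P(k, k') = (k'/k) ρ^{k'−k} σ^k ∑_{i_1+⋯+i_k = k', 0 ≤ i_j ≤ D} e^{−β(E_{i_1}+⋯+E_{i_k})}. Then for every k ≥ 1, ∑_{k'} P(k,k') = 1, i.e. P is a stochastic matrix. -/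
/-!
With weights `w i = e^{-β E_i} ρ^i`, the `k'`-th entry of row `k` is `(σ/ρ)^k / k` times the sum of
`(∑_j f_j) ∏_j w_{f_j}` over the configurations `f : Fin k → {0,…,D}` of total `k'`. Summed over `k'`,
this is the sum over all configurations, i.e. `t ∂ₜ (∑ᵢ wᵢ tⁱ)^k` at `t = 1`, which equals
`k (∑ᵢ i wᵢ)(∑ᵢ wᵢ)^{k-1} = k C^{-k}` by the equations defining `ρ` and `C`; since `1/C = ρ/σ`
the row sum is `1`.
-/

open Real Finset

theorem Fintype.prod_ite_eq_mul_pow {ι M : Type*} [Fintype ι] [DecidableEq ι] [CommMonoid M]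
    (j : ι) (a b : M) : ∏ l, (if l = j then a else b) = a * b ^ (Fintype.card ι - 1) := by
  rw [Fintype.prod_eq_mul_prod_compl j, if_pos rfl]
  simp [Finset.prod_ite_of_false, card_compl]

theorem Fintype.sum_pi_sum_mul_prod {ι α R : Type*} [Fintype ι] [DecidableEq ι] [Fintype α]
    [CommSemiring R] (u w : α → R) :
    ∑ f : ι → α, (∑ j, u (f j)) * ∏ j, w (f j) =
      Fintype.card ι * ((∑ a, u a * w a) * (∑ a, w a) ^ (Fintype.card ι - 1)) := by
  have marked : ∀ j : ι, ∑ f : ι → α, u (f j) * ∏ l, w (f l) =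
      (∑ a, u a * w a) * (∑ a, w a) ^ (Fintype.card ι - 1) := fun j => calc
    _ = ∑ f : ι → α, ∏ l, (if l = j then u (f l) else 1) * w (f l) := by
      simp only [prod_mul_distrib, prod_ite_eq']
    _ = ∏ l, ∑ a, (if l = j then u a else 1) * w a :=
      (Fintype.prod_sum fun l a => (if l = j then u a else 1) * w a).symm
    _ = ∏ l, (if l = j then ∑ a, u a * w a else ∑ a, w a) := by
      refine Finset.prod_congr rfl fun l _ => ?_
      split_ifs <;> simp
    _ = _ := Fintype.prod_ite_eq_mul_pow j _ _
  calc ∑ f : ι → α, (∑ j, u (f j)) * ∏ j, w (f j)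
      = ∑ j, ∑ f : ι → α, u (f j) * ∏ l, w (f l) := by simp only [sum_mul]; exact sum_comm
    _ = _ := by simp only [marked, sum_const, card_univ, nsmul_eq_mul]

theorem Fintype.sum_range_sum_filter_sum_val {ι M : Type*} [Fintype ι] [DecidableEq ι]
    [AddCommMonoid M] (D : ℕ) (F : ℕ → (ι → Fin (D + 1)) → M) :
    ∑ n ∈ range (D * Fintype.card ι + 1),
        ∑ f ∈ univ.filter (fun f : ι → Fin (D + 1) => ∑ j, (f j : ℕ) = n), F n f =
      ∑ f : ι → Fin (D + 1), F (∑ j, (f j : ℕ)) f := by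
  have total_le (f : ι → Fin (D + 1)) : ∑ j, (f j : ℕ) ≤ D * Fintype.card ι := by
    simpa [mul_comm] using sum_le_sum fun j (_ : j ∈ univ) => Nat.le_of_lt_succ (f j).2
  rw [← sum_fiberwise_of_maps_to (g := fun f : ι → Fin (D + 1) => ∑ j, (f j : ℕ))
    fun f _ => mem_range.2 (Nat.lt_succ_of_le (total_le f))]
  refine Finset.sum_congr rfl fun n _ => Finset.sum_congr rfl fun f hf => ?_
  rw [(mem_filter.1 hf).2]

theorem kernel_is_stochastic_general
    (D : ℕ) (E : Fin (D + 1) → ℝ) (β : ℝ)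
    (ρ C σ : ℝ) (hC : 0 < C)
    (hC1 : 1 / C = ∑ i : Fin (D + 1), Real.exp (-β * E i) * ρ ^ (i.1 : ℕ))
    (hC2 : 1 / C = ∑ i : Fin (D + 1), (i.1 : ℝ) * Real.exp (-β * E i) * ρ ^ (i.1 : ℕ))
    (hσ : 1 / C = ρ / σ)
    (P : ℕ → ℕ → ℝ)
    (hP : ∀ k k', P k k' = (k' : ℝ) / k * ρ ^ ((k' : ℤ) - (k : ℤ)) * σ ^ k *
      ∑ f ∈ Finset.univ.filter
          (fun f : Fin k → Fin (D + 1) => ∑ j, (f j).1 = k'),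
        Real.exp (-β * ∑ j, E (f j))) :
    ∀ k : ℕ, 1 ≤ k → ∑ k' ∈ Finset.range (D * k + 1), P k k' = 1 := by
  intro k hk
  obtain ⟨hρ, hσ0⟩ : ρ ≠ 0 ∧ σ ≠ 0 := div_ne_zero_iff.1 (hσ ▸ one_div_ne_zero hC.ne')
  set w : Fin (D + 1) → ℝ := fun i => Real.exp (-β * E i) * ρ ^ (i : ℕ)
  have prod_w (f : Fin k → Fin (D + 1)) :
      ∏ j, w (f j) = Real.exp (-β * ∑ j, E (f j)) * ρ ^ ∑ j, (f j : ℕ) := by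
    simp only [w, prod_mul_distrib, ← Real.exp_sum, prod_pow_eq_pow_sum, mul_sum]
  have summand (f : Fin k → Fin (D + 1)) :
      ((∑ j, (f j : ℕ) : ℕ) : ℝ) / k * ρ ^ (((∑ j, (f j : ℕ) : ℕ) : ℤ) - k) * σ ^ k *
          Real.exp (-β * ∑ j, E (f j)) =
        (σ / ρ) ^ k / k * ((∑ j, ((f j : ℕ) : ℝ)) * ∏ j, w (f j)) := by
    rw [prod_w, zpow_sub₀ hρ, zpow_natCast, zpow_natCast, div_pow]
    push_cast
    ring
  calc ∑ k' ∈ range (D * k + 1), P k k'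
      = ∑ f : Fin k → Fin (D + 1), (σ / ρ) ^ k / k * ((∑ j, ((f j : ℕ) : ℝ)) * ∏ j, w (f j)) := by
        have regroup := Fintype.sum_range_sum_filter_sum_val (ι := Fin k) D fun n f =>
          (n : ℝ) / k * ρ ^ ((n : ℤ) - k) * σ ^ k * Real.exp (-β * ∑ j, E (f j))
        rw [Fintype.card_fin] at regroup
        rw [Finset.sum_congr rfl fun n _ => (hP k n).trans (mul_sum _ _ _), regroup]
        exact Finset.sum_congr rfl fun f _ => summand f
    _ = (σ / ρ) ^ k * (1 / C) ^ k := by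
        rw [← mul_sum, Fintype.sum_pi_sum_mul_prod (fun i : Fin (D + 1) => ((i : ℕ) : ℝ)) w,
          Fintype.card_fin, ← hC1, Finset.sum_congr rfl fun i _ => (mul_assoc _ _ _).symm, ← hC2,
          ← pow_succ', Nat.sub_add_cancel hk]
        field_simp [Nat.cast_ne_zero.2 (Nat.one_le_iff_ne_zero.1 hk)]
    _ = 1 := by
        rw [hσ, ← mul_pow, div_mul_div_comm, mul_comm σ, div_self (mul_ne_zero hρ hσ0), one_pow]

/-- The transition kernel
`P(k,k') = (k'/k) ρ^{k'-k} σ^k ∑_{i_1+⋯+i_k=k', 0≤i_j≤D} e^{-β(E_{i_1}+⋯+E_{i_k})}`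
is stochastic: for every `k ≥ 1`, `∑_{k'=0}^{Dk} P(k,k') = 1`. -/
theorem kernel_is_stochastic
    (D : ℕ) (hD : 2 ≤ D) (E : Fin (D + 1) → ℝ) (β : ℝ)
    (ρ C σ : ℝ) (hρ : 0 < ρ) (hC : 0 < C)
    (hC1 : 1 / C = ∑ i : Fin (D + 1), Real.exp (-β * E i) * ρ ^ (i.1 : ℕ))
    (hC2 : 1 / C = ∑ i : Fin (D + 1), (i.1 : ℝ) * Real.exp (-β * E i) * ρ ^ (i.1 : ℕ))
    (hσ : 1 / C = ρ / σ)
    (P : ℕ → ℕ → ℝ)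
    (hP : ∀ k k', P k k' = (k' : ℝ) / k * ρ ^ ((k' : ℤ) - (k : ℤ)) * σ ^ k *
      ∑ f ∈ Finset.univ.filter
          (fun f : Fin k → Fin (D + 1) => ∑ j, (f j).1 = k'),
        Real.exp (-β * ∑ j, E (f j))) :
    ∀ k : ℕ, 1 ≤ k → ∑ k' ∈ Finset.range (D * k + 1), P k k' = 1 :=
  kernel_is_stochastic_general D E β ρ C σ hC hC1 hC2 hσ P hP
end

section
/- Let Y be the Markov chain on ℕ≥1 with transition probability P(k,k') = (k'/k) ρ^{k'−k} σ^k ∑_{i_1+⋯+i_k=k'} e^{−β∑ E_{i_j}}. Then E[Y_{n+1} | Y_n = k] = k + μ, where μ = B_2 − 1 and B_2 = ∑_{i=0}^D i² p*_i. -/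
/-!
With `σ = C ρ`, a configuration `f : Fin k → Fin (D + 1)` with `∑ f j = k'` carries the weight
`ρ^(k'-k) σ^k e^{-β ∑ E (f j)} = ∏ j, p*_{f j}`. Hence `∑ k' k' P(k,k') = E[S²] / k`, where
`S = X₁ + ⋯ + X_k` is a sum of independent `p*`-distributed variables. The two defining equations
of `C` say that `p*` is a probability vector with mean `1`, so `E[S²] = k B₂ + k (k - 1)`.
-/

open Real Finset

section Moments

variable {α R : Type*} [Fintype α] [CommRing R] {n : ℕ} (p x : α → R)

theorem sum_apply_mul_apply_mul_prod (hp : ∑ a, p a = 1) (j l : Fin n) :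
    ∑ f : Fin n → α, x (f j) * x (f l) * ∏ t, p (f t) =
      if j = l then ∑ a, x a ^ 2 * p a else (∑ a, x a * p a) ^ 2 := by
  let g : Fin n → α → R := fun t a =>
    (if t = j then x a else 1) * (if t = l then x a else 1) * p a
  have hg : ∀ f : Fin n → α, x (f j) * x (f l) * ∏ t, p (f t) = ∏ t, g t (f t) := by
    intro f
    simp only [g, prod_mul_distrib, prod_ite_eq', mem_univ, if_true]
  rw [Fintype.sum_congr _ _ hg, ← Fintype.prod_sum]
  split_ifs with hjl
  · subst hjl
    have : ∀ t, ∑ a, g t a = if t = j then ∑ a, x a ^ 2 * p a else 1 := by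
      intro t
      split_ifs with ht <;> simp [g, ht, hp, sq, mul_assoc]
    simp [this]
  · have : ∀ t, ∑ a, g t a =
        (if t = j then ∑ a, x a * p a else 1) * (if t = l then ∑ a, x a * p a else 1) := by
      intro t
      by_cases htj : t = j <;> by_cases htl : t = l
      · exact absurd (htj.symm.trans htl) hjl
      all_goals simp [g, htj, htl, hp, hjl, Ne.symm hjl]
    simp only [this, prod_mul_distrib, prod_ite_eq', mem_univ, if_true, sq]

theorem sum_sq_sum_apply_mul_prod (hp : ∑ a, p a = 1) :
    ∑ f : Fin n → α, (∑ j, x (f j)) ^ 2 * ∏ t, p (f t) =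
      n * ∑ a, x a ^ 2 * p a + n * (n - 1) * (∑ a, x a * p a) ^ 2 := by
  have expand : ∑ f : Fin n → α, (∑ j, x (f j)) ^ 2 * ∏ t, p (f t) =
      ∑ j, ∑ l, ∑ f : Fin n → α, x (f j) * x (f l) * ∏ t, p (f t) := by
    simp_rw [sq, sum_mul_sum, sum_mul]
    rw [sum_comm]
    exact sum_congr rfl fun j _ => sum_comm
  simp_rw [expand, sum_apply_mul_apply_mul_prod p x hp]
  rcases n with _ | n
  · simp
  · simp only [sum_ite, filter_eq, filter_ne, mem_univ, ↓reduceIte, sum_const, card_singleton,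
      one_smul, card_erase_of_mem, card_univ, Fintype.card_fin, add_tsub_cancel_right, nsmul_eq_mul]
    push_cast
    ring

end Moments

theorem prod_const_mul_exp_mul_pow {ι α : Type*} [Fintype ι] (w : α → ℕ) (E : α → ℝ)
    (β ρ C : ℝ) (f : ι → α) :
    ∏ t, C * exp (-β * E (f t)) * ρ ^ w (f t) =
      C ^ Fintype.card ι * exp (-β * ∑ t, E (f t)) * ρ ^ ∑ t, w (f t) := by
  rw [prod_mul_distrib, prod_mul_distrib, prod_const, mul_sum, exp_sum, prod_pow_eq_pow_sum,
    card_univ]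

theorem sum_val_mem_range {D k : ℕ} (f : Fin k → Fin (D + 1)) :
    ∑ j, (f j).1 ∈ range (D * k + 1) := by
  rw [mem_range, Nat.lt_succ_iff, mul_comm]
  simpa using sum_le_sum fun j (_ : j ∈ univ) => Nat.lt_succ_iff.mp (f j).2

theorem natCast_mul_weight_eq {D k k' : ℕ} (E : Fin (D + 1) → ℝ) (β ρ C : ℝ) (hρ : ρ ≠ 0)
    (f : Fin k → Fin (D + 1)) (hf : ∑ j, (f j).1 = k') :
    (k' : ℝ) * ((k' : ℝ) / k * ρ ^ ((k' : ℤ) - (k : ℤ)) * (C * ρ) ^ k *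
      exp (-β * ∑ j, E (f j))) =
      (∑ j, ((f j).1 : ℝ)) ^ 2 * (∏ t, C * exp (-β * E (f t)) * ρ ^ (f t).1) / k := by
  rw [prod_const_mul_exp_mul_pow, Fintype.card_fin, hf, ← Nat.cast_sum, hf,
    zpow_sub₀ hρ, zpow_natCast, zpow_natCast]
  field_simp
  ring

theorem conditional_first_moment_general
    (D : ℕ) (E : Fin (D + 1) → ℝ) (β : ℝ)
    (ρ C σ : ℝ) (hρ : 0 < ρ) (hC : 0 < C)
    (hC1 : 1 / C = ∑ i : Fin (D + 1), Real.exp (-β * E i) * ρ ^ (i.1 : ℕ))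
    (hC2 : 1 / C = ∑ i : Fin (D + 1), (i.1 : ℝ) * Real.exp (-β * E i) * ρ ^ (i.1 : ℕ))
    (hσ : 1 / C = ρ / σ)
    (pstar : Fin (D + 1) → ℝ)
    (hp : ∀ i, pstar i = C * Real.exp (-β * E i) * ρ ^ (i.1 : ℕ))
    (B₂ μ : ℝ)
    (hB₂ : B₂ = ∑ i : Fin (D + 1), (i.1 : ℝ) ^ 2 * pstar i)
    (hμ : μ = B₂ - 1)
    (P : ℕ → ℕ → ℝ)
    (hP : ∀ k k', P k k' = (k' : ℝ) / k * ρ ^ ((k' : ℤ) - (k : ℤ)) * σ ^ k *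
      ∑ f ∈ Finset.univ.filter
          (fun f : Fin k → Fin (D + 1) => ∑ j, (f j).1 = k'),
        Real.exp (-β * ∑ j, E (f j))) :
    ∀ k : ℕ, 1 ≤ k →
      ∑ k' ∈ Finset.range (D * k + 1), (k' : ℝ) * P k k' = (k : ℝ) + μ := by
  intro k hk
  have hσ' : σ = C * ρ := by
    have : σ ≠ 0 := by rintro rfl; simp [hC.ne'] at hσ
    field_simp at hσ
    linarith
  have hmass : ∑ i, pstar i = 1 := by
    simp_rw [hp, mul_assoc, ← mul_sum, ← hC1, mul_one_div_cancel hC.ne']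
  have hmean : ∑ i : Fin (D + 1), (i.1 : ℝ) * pstar i = 1 := by
    rw [← mul_one_div_cancel hC.ne', hC2, mul_sum]
    exact sum_congr rfl fun i _ => by rw [hp]; ring
  have hterm : ∀ k' : ℕ, (k' : ℝ) * P k k' = ∑ f ∈ univ.filter
      (fun f : Fin k → Fin (D + 1) => ∑ j, (f j).1 = k'),
      (∑ j, ((f j).1 : ℝ)) ^ 2 * (∏ t, pstar (f t)) / k := by
    intro k'
    rw [hP, hσ', mul_sum, mul_sum]
    refine sum_congr rfl fun f hf => ?_
    simp_rw [hp]
    exact natCast_mul_weight_eq E β ρ C hρ.ne' f (mem_filter.mp hf).2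
  calc ∑ k' ∈ range (D * k + 1), (k' : ℝ) * P k k'
      = ∑ f : Fin k → Fin (D + 1), (∑ j, ((f j).1 : ℝ)) ^ 2 * (∏ t, pstar (f t)) / k := by
        rw [sum_congr rfl fun k' _ => hterm k', sum_fiberwise_of_maps_to fun f _ =>
          sum_val_mem_range f]
    _ = (k * B₂ + k * (k - 1) * 1 ^ 2) / k := by
        rw [← sum_div, sum_sq_sum_apply_mul_prod pstar (fun i => (i.1 : ℝ)) hmass, ← hB₂, hmean]
    _ = k + μ := by
        have : (k : ℝ) ≠ 0 := by positivity
        field_simp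
        rw [hμ]
        ring

/-- For the level-size Markov chain with transition kernel
`P(k,k') = (k'/k) ρ^{k'-k} σ^k ∑_{i_1+⋯+i_k=k'} e^{-β∑E_{i_j}}`, the conditional
mean is `E[Y_{n+1} | Y_n = k] = k + μ`, where `μ = B_2 - 1`, `B_2 = ∑ i² p*_i`. -/
theorem conditional_first_moment
    (D : ℕ) (hD : 2 ≤ D) (E : Fin (D + 1) → ℝ) (β : ℝ)
    (ρ C σ : ℝ) (hρ : 0 < ρ) (hC : 0 < C)
    (hC1 : 1 / C = ∑ i : Fin (D + 1), Real.exp (-β * E i) * ρ ^ (i.1 : ℕ))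
    (hC2 : 1 / C = ∑ i : Fin (D + 1), (i.1 : ℝ) * Real.exp (-β * E i) * ρ ^ (i.1 : ℕ))
    (hσ : 1 / C = ρ / σ)
    (pstar : Fin (D + 1) → ℝ)
    (hp : ∀ i, pstar i = C * Real.exp (-β * E i) * ρ ^ (i.1 : ℕ))
    (B₂ μ : ℝ)
    (hB₂ : B₂ = ∑ i : Fin (D + 1), (i.1 : ℝ) ^ 2 * pstar i)
    (hμ : μ = B₂ - 1)
    (P : ℕ → ℕ → ℝ)
    (hP : ∀ k k', P k k' = (k' : ℝ) / k * ρ ^ ((k' : ℤ) - (k : ℤ)) * σ ^ k *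
      ∑ f ∈ Finset.univ.filter
          (fun f : Fin k → Fin (D + 1) => ∑ j, (f j).1 = k'),
        Real.exp (-β * ∑ j, E (f j))) :
    ∀ k : ℕ, 1 ≤ k →
      ∑ k' ∈ Finset.range (D * k + 1), (k' : ℝ) * P k k' = (k : ℝ) + μ :=
  conditional_first_moment_general D E β ρ C σ hρ hC hC1 hC2 hσ pstar hp B₂ μ hB₂ hμ P hP
end

section
/- For the Markov chain Y with transition probability P(k,k') = (k'/k) ρ^{k'−k} σ^k ∑_{i_1+⋯+i_k=k'} e^{−β∑E_{i_j}}, one has E[Y_{n+1}² | Y_n = k] = B_3 + 3(k−1)B_2 + (k−1)(k−2), where B_m = ∑_{i=0}^D i^m p*_i. -/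
open Real Finset

section aux
variable {n : ℕ} (p : Fin n → ℝ)

lemma pi_succ_sum {k : ℕ} (F : (Fin (k + 1) → Fin n) → ℝ) :
    ∑ f : Fin (k + 1) → Fin n, F f
      = ∑ x : Fin n, ∑ g : Fin k → Fin n, F (Fin.cons x g : Fin (k+1) → Fin n) := by
  rw [← Equiv.sum_comp (Fin.consEquiv (fun _ => Fin n)) F, Fintype.sum_prod_type]
  rfl

lemma moment0 (h0 : ∑ i, p i = 1) :
    ∀ k, ∑ g : Fin k → Fin n, ∏ j, p (g j) = 1 := by
  intro k
  induction k with
  | zero => simp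
  | succ k ih =>
    rw [pi_succ_sum]
    have step : ∀ x : Fin n, ∑ g : Fin k → Fin n, ∏ j, p ((Fin.cons x g : Fin (k+1) → Fin n) j) = p x := by
      intro x
      simp only [Fin.prod_univ_succ, Fin.cons_zero, Fin.cons_succ]
      rw [← Finset.mul_sum, ih, mul_one]
    rw [Finset.sum_congr rfl (fun x _ => step x), h0]

lemma moment1 (h0 : ∑ i, p i = 1) (h1 : ∑ i : Fin n, (i.1 : ℝ) * p i = 1) :
    ∀ k, ∑ g : Fin k → Fin n, (∑ j, ((g j).1 : ℝ)) * ∏ j, p (g j) = k := by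
  intro k
  induction k with
  | zero => simp
  | succ k ih =>
    rw [pi_succ_sum]
    have step : ∀ x : Fin n,
        ∑ g : Fin k → Fin n,
          (∑ j, (((Fin.cons x g : Fin (k+1) → Fin n) j).1 : ℝ)) *
            ∏ j, p ((Fin.cons x g : Fin (k+1) → Fin n) j)
          = (x.1 : ℝ) * p x + p x * k := by
      intro x
      have e : ∀ g : Fin k → Fin n,
          (∑ j, (((Fin.cons x g : Fin (k+1) → Fin n) j).1 : ℝ)) *
            ∏ j, p ((Fin.cons x g : Fin (k+1) → Fin n) j)
          = (x.1 : ℝ) * p x * ∏ j, p (g j)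
            + p x * ((∑ j, ((g j).1 : ℝ)) * ∏ j, p (g j)) := by
        intro g
        simp only [Fin.sum_univ_succ, Fin.prod_univ_succ, Fin.cons_zero, Fin.cons_succ]
        ring
      rw [Finset.sum_congr rfl (fun g _ => e g), Finset.sum_add_distrib,
        ← Finset.mul_sum, ← Finset.mul_sum, moment0 p h0 k, ih, mul_one]
    rw [Finset.sum_congr rfl (fun x _ => step x), Finset.sum_add_distrib, h1,
      ← Finset.sum_mul, h0]
    push_cast; ring

lemma moment2 (h0 : ∑ i, p i = 1) (h1 : ∑ i : Fin n, (i.1 : ℝ) * p i = 1) {b2 : ℝ}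
    (h2 : ∑ i : Fin n, (i.1 : ℝ) ^ 2 * p i = b2) :
    ∀ k, ∑ g : Fin k → Fin n, (∑ j, ((g j).1 : ℝ)) ^ 2 * ∏ j, p (g j)
      = k * b2 + k * (k - 1) := by
  intro k
  induction k with
  | zero => simp
  | succ k ih =>
    rw [pi_succ_sum]
    have step : ∀ x : Fin n,
        ∑ g : Fin k → Fin n,
          (∑ j, (((Fin.cons x g : Fin (k+1) → Fin n) j).1 : ℝ)) ^ 2 *
            ∏ j, p ((Fin.cons x g : Fin (k+1) → Fin n) j)
          = (x.1 : ℝ) ^ 2 * p x + (x.1 : ℝ) * p x * (2 * k)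
            + p x * (k * b2 + k * (k - 1)) := by
      intro x
      have e : ∀ g : Fin k → Fin n,
          (∑ j, (((Fin.cons x g : Fin (k+1) → Fin n) j).1 : ℝ)) ^ 2 *
            ∏ j, p ((Fin.cons x g : Fin (k+1) → Fin n) j)
          = (x.1 : ℝ) ^ 2 * p x * ∏ j, p (g j)
            + (x.1 : ℝ) * p x * (2 * ((∑ j, ((g j).1 : ℝ)) * ∏ j, p (g j)))
            + p x * ((∑ j, ((g j).1 : ℝ)) ^ 2 * ∏ j, p (g j)) := by
        intro g
        simp only [Fin.sum_univ_succ, Fin.prod_univ_succ, Fin.cons_zero, Fin.cons_succ]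
        ring
      rw [Finset.sum_congr rfl (fun g _ => e g), Finset.sum_add_distrib,
        Finset.sum_add_distrib, ← Finset.mul_sum, ← Finset.mul_sum, ← Finset.mul_sum,
        ← Finset.mul_sum, moment0 p h0 k, moment1 p h0 h1 k, ih, mul_one]
    rw [Finset.sum_congr rfl (fun x _ => step x), Finset.sum_add_distrib,
      Finset.sum_add_distrib, h2, ← Finset.sum_mul, h1, ← Finset.sum_mul, h0]
    push_cast; ring

lemma moment3 (h0 : ∑ i, p i = 1) (h1 : ∑ i : Fin n, (i.1 : ℝ) * p i = 1) {b2 b3 : ℝ}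
    (h2 : ∑ i : Fin n, (i.1 : ℝ) ^ 2 * p i = b2)
    (h3 : ∑ i : Fin n, (i.1 : ℝ) ^ 3 * p i = b3) :
    ∀ k, ∑ g : Fin k → Fin n, (∑ j, ((g j).1 : ℝ)) ^ 3 * ∏ j, p (g j)
      = k * b3 + 3 * k * (k - 1) * b2 + k * (k - 1) * (k - 2) := by
  intro k
  induction k with
  | zero => simp
  | succ k ih =>
    rw [pi_succ_sum]
    have step : ∀ x : Fin n,
        ∑ g : Fin k → Fin n,
          (∑ j, (((Fin.cons x g : Fin (k+1) → Fin n) j).1 : ℝ)) ^ 3 *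
            ∏ j, p ((Fin.cons x g : Fin (k+1) → Fin n) j)
          = (x.1 : ℝ) ^ 3 * p x + (x.1 : ℝ) ^ 2 * p x * (3 * k)
            + (x.1 : ℝ) * p x * (3 * (k * b2 + k * (k - 1)))
            + p x * (k * b3 + 3 * k * (k - 1) * b2 + k * (k - 1) * (k - 2)) := by
      intro x
      have e : ∀ g : Fin k → Fin n,
          (∑ j, (((Fin.cons x g : Fin (k+1) → Fin n) j).1 : ℝ)) ^ 3 *
            ∏ j, p ((Fin.cons x g : Fin (k+1) → Fin n) j)
          = (x.1 : ℝ) ^ 3 * p x * ∏ j, p (g j)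
            + (x.1 : ℝ) ^ 2 * p x * (3 * ((∑ j, ((g j).1 : ℝ)) * ∏ j, p (g j)))
            + (x.1 : ℝ) * p x * (3 * ((∑ j, ((g j).1 : ℝ)) ^ 2 * ∏ j, p (g j)))
            + p x * ((∑ j, ((g j).1 : ℝ)) ^ 3 * ∏ j, p (g j)) := by
        intro g
        simp only [Fin.sum_univ_succ, Fin.prod_univ_succ, Fin.cons_zero, Fin.cons_succ]
        ring
      rw [Finset.sum_congr rfl (fun g _ => e g), Finset.sum_add_distrib,
        Finset.sum_add_distrib, Finset.sum_add_distrib, ← Finset.mul_sum,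
        ← Finset.mul_sum, ← Finset.mul_sum, ← Finset.mul_sum, ← Finset.mul_sum,
        ← Finset.mul_sum, moment0 p h0 k, moment1 p h0 h1 k,
        moment2 p h0 h1 h2 k, ih, mul_one]
    rw [Finset.sum_congr rfl (fun x _ => step x), Finset.sum_add_distrib,
      Finset.sum_add_distrib, Finset.sum_add_distrib, h3, ← Finset.sum_mul, h2,
      ← Finset.sum_mul, h1, ← Finset.sum_mul, h0]
    push_cast; ring

end aux

/-- For the level-size Markov chain with transition kernel
`P(k,k') = (k'/k) ρ^{k'-k} σ^k ∑_{i_1+⋯+i_k=k'} e^{-β∑E_{i_j}}`, the conditional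
second moment is `E[Y_{n+1}² | Y_n = k] = B_3 + 3(k-1)B_2 + (k-1)(k-2)`, where `B_m = ∑ i^m p*_i`. -/
theorem conditional_second_moment
    (D : ℕ) (hD : 2 ≤ D) (E : Fin (D + 1) → ℝ) (β : ℝ)
    (ρ C σ : ℝ) (hρ : 0 < ρ) (hC : 0 < C)
    (hC1 : 1 / C = ∑ i : Fin (D + 1), Real.exp (-β * E i) * ρ ^ (i.1 : ℕ))
    (hC2 : 1 / C = ∑ i : Fin (D + 1), (i.1 : ℝ) * Real.exp (-β * E i) * ρ ^ (i.1 : ℕ))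
    (hσ : 1 / C = ρ / σ)
    (pstar : Fin (D + 1) → ℝ)
    (hp : ∀ i, pstar i = C * Real.exp (-β * E i) * ρ ^ (i.1 : ℕ))
    (B₂ B₃ : ℝ)
    (hB₂ : B₂ = ∑ i : Fin (D + 1), (i.1 : ℝ) ^ 2 * pstar i)
    (hB₃ : B₃ = ∑ i : Fin (D + 1), (i.1 : ℝ) ^ 3 * pstar i)
    (P : ℕ → ℕ → ℝ)
    (hP : ∀ k k', P k k' = (k' : ℝ) / k * ρ ^ ((k' : ℤ) - (k : ℤ)) * σ ^ k *
      ∑ f ∈ Finset.univ.filter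
          (fun f : Fin k → Fin (D + 1) => ∑ j, (f j).1 = k'),
        Real.exp (-β * ∑ j, E (f j))) :
    ∀ k : ℕ, 1 ≤ k →
      ∑ k' ∈ Finset.range (D * k + 1), (k' : ℝ) ^ 2 * P k k'
        = B₃ + 3 * ((k : ℝ) - 1) * B₂ + ((k : ℝ) - 1) * ((k : ℝ) - 2) := by
  intro k hk
  have hkR : (0:ℝ) < k := by exact_mod_cast hk
  have hρ0 : ρ ≠ 0 := hρ.ne'
  have hC0 : C ≠ 0 := hC.ne'
  have hσ0 : σ ≠ 0 := by
    intro h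
    rw [h, div_zero] at hσ
    exact (one_div_ne_zero hC0) hσ
  have hσval : σ = C * ρ := by
    rw [div_eq_div_iff hC0 hσ0] at hσ
    linarith
  -- basic facts about pstar
  have h0 : ∑ i, pstar i = 1 := by
    have : ∑ i, pstar i = C * ∑ i : Fin (D+1), Real.exp (-β * E i) * ρ ^ (i.1 : ℕ) := by
      rw [Finset.mul_sum]
      exact Finset.sum_congr rfl fun i _ => by rw [hp]; ring
    rw [this, ← hC1]; field_simp
  have h1 : ∑ i : Fin (D+1), (i.1 : ℝ) * pstar i = 1 := by
    have : ∑ i : Fin (D+1), (i.1 : ℝ) * pstar i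
        = C * ∑ i : Fin (D+1), (i.1 : ℝ) * Real.exp (-β * E i) * ρ ^ (i.1 : ℕ) := by
      rw [Finset.mul_sum]
      exact Finset.sum_congr rfl fun i _ => by rw [hp]; ring
    rw [this, ← hC2]; field_simp
  -- per-fiber identity
  have key : ∀ k' ∈ Finset.range (D * k + 1), (k' : ℝ) ^ 2 * P k k'
      = ∑ f ∈ Finset.univ.filter
            (fun f : Fin k → Fin (D + 1) => ∑ j, (f j).1 = k'),
          ((∑ j, ((f j).1 : ℝ)) ^ 3 * ∏ j, pstar (f j)) / k := by
    intro k' _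
    rw [hP, Finset.mul_sum, Finset.mul_sum]
    refine Finset.sum_congr rfl fun f hf => ?_
    rw [Finset.mem_filter] at hf
    obtain ⟨-, hf⟩ := hf
    subst hf
    have hprodp : ∏ j, pstar (f j)
        = C ^ k * (ρ ^ (∑ j, (f j).1) * ∏ j, Real.exp (-β * E (f j))) := by
      rw [Finset.prod_congr rfl (fun j _ => hp (f j)), Finset.prod_mul_distrib,
        Finset.prod_mul_distrib, Finset.prod_const, Finset.prod_pow_eq_pow_sum]
      simp only [Finset.card_univ, Fintype.card_fin]
      ring
    have hexp : Real.exp (-β * ∑ j, E (f j)) = ∏ j, Real.exp (-β * E (f j)) := by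
      rw [Finset.mul_sum, Real.exp_sum]
    have hzp : ρ ^ ((((∑ j, (f j).1 : ℕ)) : ℤ) - (k : ℤ))
        = ρ ^ (∑ j, (f j).1) / ρ ^ k := by
      rw [zpow_sub₀ hρ0, zpow_natCast, zpow_natCast]
    have hcast : (((∑ j, (f j).1 : ℕ)) : ℝ) = ∑ j, ((f j).1 : ℝ) := by push_cast; rfl
    rw [hzp, hexp, hprodp, hcast, hσval]
    field_simp
    ring
  rw [Finset.sum_congr rfl key]
  have hmaps : ∀ f : Fin k → Fin (D + 1), f ∈ (Finset.univ : Finset (Fin k → Fin (D+1))) →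
      (∑ j, (f j).1) ∈ Finset.range (D * k + 1) := by
    intro f _
    rw [Finset.mem_range, Nat.lt_succ_iff]
    calc ∑ j, (f j).1 ≤ ∑ _j : Fin k, D :=
          Finset.sum_le_sum fun j _ => Nat.le_of_lt_succ (f j).2
      _ = k * D := by simp [Finset.sum_const, mul_comm]
      _ = D * k := mul_comm k D
  rw [Finset.sum_fiberwise_of_maps_to hmaps, ← Finset.sum_div,
    moment3 pstar h0 h1 hB₂.symm hB₃.symm k]
  field_simp
end

section
/- With v(s) = ∑_{i=0}^D p*_i e^{si} and w(s) = v'(s) = ∑_{i=0}^D i p*_i e^{si}, the conditional Laplace transform of the chain Y satisfies E[e^{s Y_{n+1}} | Y_n = k] = w(s) v(s)^{k−1} for all s ≤ 0 and k ≥ 1. -/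
open Real Finset

set_option maxHeartbeats 1000000 in
/-- With `v(s) = ∑ p*_i e^{si}` and `w(s) = v'(s) = ∑ i p*_i e^{si}`,
the conditional Laplace transform of the chain `Y` satisfies
`E[e^{sY_{n+1}} | Y_n = k] = w(s) v(s)^{k-1}` for all `s ≤ 0`, `k ≥ 1`. -/
theorem conditional_laplace_transform
    (D : ℕ) (hD : 2 ≤ D) (E : Fin (D + 1) → ℝ) (β : ℝ)
    (ρ C σ : ℝ) (hρ : 0 < ρ) (hC : 0 < C)
    (hC1 : 1 / C = ∑ i : Fin (D + 1), Real.exp (-β * E i) * ρ ^ (i.1 : ℕ))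
    (hC2 : 1 / C = ∑ i : Fin (D + 1), (i.1 : ℝ) * Real.exp (-β * E i) * ρ ^ (i.1 : ℕ))
    (hσ : 1 / C = ρ / σ)
    (pstar : Fin (D + 1) → ℝ)
    (hp : ∀ i, pstar i = C * Real.exp (-β * E i) * ρ ^ (i.1 : ℕ))
    (v w : ℝ → ℝ)
    (hv : ∀ s, v s = ∑ i : Fin (D + 1), pstar i * Real.exp (s * i.1))
    (hw : ∀ s, w s = ∑ i : Fin (D + 1), (i.1 : ℝ) * pstar i * Real.exp (s * i.1))
    (P : ℕ → ℕ → ℝ)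
    (hP : ∀ k k', P k k' = (k' : ℝ) / k * ρ ^ ((k' : ℤ) - (k : ℤ)) * σ ^ k *
      ∑ f ∈ Finset.univ.filter
          (fun f : Fin k → Fin (D + 1) => ∑ j, (f j).1 = k'),
        Real.exp (-β * ∑ j, E (f j))) :
    ∀ s ≤ (0 : ℝ), ∀ k : ℕ, 1 ≤ k →
      ∑ k' ∈ Finset.range (D * k + 1), Real.exp (s * k') * P k k'
        = w s * v s ^ (k - 1) := by
  intro s _hs k hk
  have hρ0 : ρ ≠ 0 := ne_of_gt hρ
  have hC0 : C ≠ 0 := ne_of_gt hC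
  have hk0 : (k : ℝ) ≠ 0 := Nat.cast_ne_zero.mpr (by omega)
  have hσ0 : σ ≠ 0 := by
    intro h
    rw [h, div_zero] at hσ
    exact one_div_ne_zero hC0 hσ
  have hσC : σ = ρ * C := by
    field_simp at hσ
    linarith
  -- the "tilted" weights, made opaque
  obtain ⟨q, hq⟩ : ∃ q : Fin (D + 1) → ℝ,
      ∀ i, q i = pstar i * Real.exp (s * i.1) :=
    ⟨fun i => pstar i * Real.exp (s * i.1), fun _ => rfl⟩
  -- Step A : rewrite each term as a sum over functions in the fiber
  have key : ∀ k' ∈ Finset.range (D * k + 1),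
      Real.exp (s * k') * P k k'
        = ∑ f ∈ Finset.univ.filter
            (fun f : Fin k → Fin (D + 1) => ∑ j, (f j).1 = k'),
          ((∑ j, ((f j).1 : ℝ)) / k) * ∏ m, q (f m) := by
    intro k' _
    rw [hP, Finset.mul_sum, Finset.mul_sum]
    refine Finset.sum_congr rfl fun f hf => ?_
    have hsum : ∑ j, (f j).1 = k' := (Finset.mem_filter.mp hf).2
    have hcast : (∑ j, ((f j).1 : ℝ)) = (k' : ℝ) := by
      rw [← hsum]; push_cast; ring
    have hprod : ∏ m, q (f m)
        = C ^ k * Real.exp (-β * ∑ j, E (f j)) * (ρ ^ k' * Real.exp (s * k')) := by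
      have hqf : ∀ m : Fin k, q (f m)
          = C * (Real.exp (-β * E (f m)) * (ρ ^ ((f m).1) * Real.exp (s * ((f m).1 : ℝ)))) := by
        intro m; rw [hq, hp]; ring
      rw [Finset.prod_congr rfl fun m _ => hqf m, Finset.prod_mul_distrib,
        Finset.prod_mul_distrib, Finset.prod_mul_distrib, Finset.prod_const,
        Finset.card_univ, Fintype.card_fin,
        Finset.prod_pow_eq_pow_sum, hsum, ← Real.exp_sum, ← Real.exp_sum,
        ← Finset.mul_sum, ← Finset.mul_sum, hcast]
      ring
    have hzpow : ρ ^ ((k' : ℤ) - (k : ℤ)) * σ ^ k = ρ ^ k' * C ^ k := by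
      rw [hσC, mul_pow]
      have h2 : ρ ^ ((k' : ℤ) - (k : ℤ)) * ρ ^ k = ρ ^ k' := by
        rw [← zpow_natCast ρ k, ← zpow_natCast ρ k', ← zpow_add₀ hρ0, sub_add_cancel]
      rw [← mul_assoc, h2]
    rw [hprod, hcast]
    rw [show (k' : ℝ) / ↑k * ρ ^ ((k' : ℤ) - (k : ℤ)) * σ ^ k
        = (k' : ℝ) / ↑k * (ρ ^ ((k' : ℤ) - (k : ℤ)) * σ ^ k) by ring, hzpow]
    ring
  -- Step B : collapse the fiberwise sum
  rw [Finset.sum_congr rfl key]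
  rw [Finset.sum_fiberwise_of_maps_to (t := Finset.range (D * k + 1))
    (g := fun f : Fin k → Fin (D + 1) => ∑ j, (f j).1)
    (fun f _ => by
      rw [Finset.mem_range, Nat.lt_succ_iff]
      calc ∑ j, (f j).1 ≤ ∑ _j : Fin k, D :=
            Finset.sum_le_sum fun j _ => Nat.le_of_lt_succ (f j).2
        _ = D * k := by simp [Finset.sum_const, mul_comm])]
  -- Step C : swap sums
  have hswap : ∑ f : Fin k → Fin (D + 1), ((∑ j, ((f j).1 : ℝ)) / k) * ∏ m, q (f m)
      = ∑ j : Fin k, ∑ f : Fin k → Fin (D + 1), (((f j).1 : ℝ) * ∏ m, q (f m)) / k := by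
    rw [← Finset.sum_comm]
    refine Finset.sum_congr rfl fun f _ => ?_
    rw [← Finset.sum_div, ← Finset.sum_mul]
    ring
  rw [hswap]
  -- Step D : factorize each inner sum
  have hD1 : ∀ j : Fin k, ∑ f : Fin k → Fin (D + 1), ((f j).1 : ℝ) * ∏ m, q (f m)
      = w s * v s ^ (k - 1) := by
    intro j
    have h1 : ∀ f : Fin k → Fin (D + 1),
        ∏ m, (if m = j then ((f m).1 : ℝ) else 1) * q (f m)
          = ((f j).1 : ℝ) * ∏ m, q (f m) := by
      intro f
      rw [Finset.prod_mul_distrib, Finset.prod_ite_eq' Finset.univ j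
        (fun m => ((f m).1 : ℝ)), if_pos (Finset.mem_univ j)]
    calc ∑ f : Fin k → Fin (D + 1), ((f j).1 : ℝ) * ∏ m, q (f m)
        = ∑ f ∈ Fintype.piFinset (fun _ : Fin k => (Finset.univ : Finset (Fin (D + 1)))),
            ∏ m, (if m = j then ((f m).1 : ℝ) else 1) * q (f m) := by
          rw [Fintype.piFinset_univ]
          exact Finset.sum_congr rfl fun f _ => (h1 f).symm
      _ = ∏ m : Fin k, ∑ i : Fin (D + 1), (if m = j then (i.1 : ℝ) else 1) * q i :=
          (Finset.prod_univ_sum (fun _ : Fin k => (Finset.univ : Finset (Fin (D + 1))))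
            (fun m i => (if m = j then (i.1 : ℝ) else 1) * q i)).symm
      _ = ∏ m : Fin k, (if m = j then w s else v s) := by
          refine Finset.prod_congr rfl fun m _ => ?_
          by_cases h : m = j
          · simp only [h, eq_self_iff_true, if_true]
            rw [hw]
            exact Finset.sum_congr rfl fun i _ => by rw [hq]; ring
          · simp only [if_neg h, one_mul]
            rw [hv]
            exact Finset.sum_congr rfl fun i _ => hq i
      _ = w s * v s ^ (k - 1) := by
          rw [← Finset.mul_prod_erase Finset.univ _ (Finset.mem_univ j), if_pos rfl]
          congr 1
          rw [Finset.prod_congr rfl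
            (fun m hm => if_neg (Finset.ne_of_mem_erase hm)),
            Finset.prod_const, Finset.card_erase_of_mem (Finset.mem_univ j),
            Finset.card_univ, Fintype.card_fin]
  rw [Finset.sum_congr rfl fun j _ => by rw [← Finset.sum_div, hD1 j]]
  rw [Finset.sum_const, Finset.card_univ, Fintype.card_fin, nsmul_eq_mul]
  field_simp
end

section
/- Let f: (−∞,0] → (−∞,0] satisfy f(s) = s + (μ/2)s² + r(s) with |r(s)| ≤ c|s|³, f increasing with 0 ≤ f'(s) ≤ 1 for small |s|, and f(s) ≥ s. Set x_{n,k} = f^{∘k}(x/n) and y_{n,k} = 1/(n/x − (μ/2)k) for x ≤ 0. Then for all sufficiently large n and all 0 ≤ k ≤ n, |y_{n,k} − x_{n,k}| ≤ k(μ²/4 + c)(|x|/n)³. -/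
open Real

set_option maxHeartbeats 1600000 in
/-- Let f on (−∞,0] satisfy f(s) = s + (μ/2)s² + r(s) with
|r(s)| ≤ c|s|³, f(s) ≤ 0, s ≤ f(s), and 0 ≤ f'(s) ≤ 1 for small |s|.
Set x_{n,k} = f^∘k(x/n) and y_{n,k} = 1/(n/x − (μ/2)k). Then for all
sufficiently large n and all 0 ≤ k ≤ n,
|y_{n,k} − x_{n,k}| ≤ k(μ²/4 + c)(|x|/n)³. -/
theorem iterates_close_to_explicit_sequence
    (μ c x : ℝ) (hμ : 0 < μ) (hc : 0 < c) (hx : x ≤ 0)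
    (f : ℝ → ℝ)
    (hmap : ∀ s ≤ (0 : ℝ), f s ≤ 0)
    (hge : ∀ s ≤ (0 : ℝ), s ≤ f s)
    (htaylor : ∀ s ≤ (0 : ℝ), |f s - s - μ / 2 * s ^ 2| ≤ c * |s| ^ 3)
    (hderiv : ∃ δ > (0 : ℝ), ∀ s, -δ ≤ s → s ≤ 0 →
      0 ≤ deriv f s ∧ deriv f s ≤ 1)
    (y : ℕ → ℕ → ℝ)
    (hy : ∀ n k, y n k = x / ((n : ℝ) - μ / 2 * k * x)) :
    ∃ N : ℕ, ∀ n ≥ N, ∀ k ≤ n,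
      |y n k - f^[k] (x / n)| ≤ k * (μ ^ 2 / 4 + c) * (|x| / n) ^ 3 := by
  obtain ⟨N, hN⟩ := exists_nat_ge (max 1 (μ * |x|))
  refine ⟨N, fun n hn k hk => ?_⟩
  have hn1 : (1:ℝ) ≤ (n:ℝ) :=
    le_trans ((le_max_left _ _).trans hN) (Nat.cast_le.mpr hn)
  have hnpos : (0:ℝ) < (n:ℝ) := lt_of_lt_of_le one_pos hn1
  have hnx : μ * |x| ≤ (n:ℝ) :=
    le_trans ((le_max_right _ _).trans hN) (Nat.cast_le.mpr hn)
  set H : ℝ := |x| / (n:ℝ) with hH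
  have hH0 : 0 ≤ H := by rw [hH]; positivity
  have hμH : μ * H ≤ 1 := by
    have h1 : μ * H = μ * |x| / (n:ℝ) := by rw [hH]; ring
    rw [h1, div_le_one hnpos]; exact hnx
  have hxh : x / (n:ℝ) = -H := by
    rw [hH, abs_of_nonpos hx]; ring
  clear_value H
  -- bounds on the iterates
  have hxk : ∀ m : ℕ, -H ≤ f^[m] (x / (n:ℝ)) ∧ f^[m] (x / (n:ℝ)) ≤ 0 := by
    intro m
    induction m with
    | zero =>
      rw [Function.iterate_zero_apply, hxh]
      exact ⟨le_rfl, neg_nonpos.mpr hH0⟩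
    | succ m ih =>
      rw [Function.iterate_succ_apply']
      exact ⟨ih.1.trans (hge _ ih.2), hmap _ ih.2⟩
  -- denominator bounds
  have hd : ∀ m : ℕ, (n:ℝ) ≤ (n:ℝ) - μ / 2 * m * x := by
    intro m
    have hm0 : (0:ℝ) ≤ μ / 2 * m := by positivity
    nlinarith
  have hdpos : ∀ m : ℕ, (0:ℝ) < (n:ℝ) - μ / 2 * m * x :=
    fun m => lt_of_lt_of_le hnpos (hd m)
  -- bounds on y
  have hyb : ∀ m : ℕ, -H ≤ y n m ∧ y n m ≤ 0 := by
    intro m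
    rw [hy]
    constructor
    · rw [← hxh, div_le_div_iff₀ hnpos (hdpos m)]
      nlinarith [hd m]
    · exact div_nonpos_of_nonpos_of_nonneg hx (hdpos m).le
  -- recurrence for y
  have hrec : ∀ m : ℕ, y n (m+1) - y n m = μ / 2 * y n m * y n (m+1) := by
    intro m
    rw [hy, hy]
    have h1 := (hdpos m).ne'
    have h2 := (hdpos (m+1)).ne'
    push_cast at h2 ⊢
    rw [div_sub_div _ _ h2 h1, div_mul_div_comm, div_mul_div_comm,
      div_eq_div_iff (mul_ne_zero h2 h1) (by positivity)]
    ring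
  clear hk
  induction k with
  | zero => simp [hy]
  | succ k ih =>
    rw [Function.iterate_succ_apply']
    have hX := hxk k
    have hY := hyb k
    have hY1 := hyb (k+1)
    have hrk := hrec k
    set X := f^[k] (x / (n:ℝ)) with hXdef
    set yk := y n k with hykdef
    set yk1 := y n (k+1) with hyk1def
    clear_value X yk yk1
    have key : yk1 - f X =
        (yk - X) * (1 + μ / 2 * (yk + X)) + μ ^ 2 / 4 * yk ^ 2 * yk1
        - (f X - X - μ / 2 * X ^ 2) := by
      linear_combination (1 + μ / 2 * yk) * hrk
    have ht0 : 0 ≤ 1 + μ / 2 * (yk + X) := by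
      have h1 : (0:ℝ) ≤ μ * (yk + X + 2 * H) :=
        mul_nonneg hμ.le (by linarith [hY.1, hX.1])
      nlinarith
    have ht1 : 1 + μ / 2 * (yk + X) ≤ 1 := by
      have h1 : (0:ℝ) ≤ μ * (-(yk + X)) :=
        mul_nonneg hμ.le (by linarith [hY.2, hX.2])
      nlinarith
    have hA : |(yk - X) * (1 + μ / 2 * (yk + X))| ≤ (k:ℝ) * (μ ^ 2 / 4 + c) * H ^ 3 := by
      rw [abs_mul, abs_of_nonneg ht0]
      calc |yk - X| * (1 + μ / 2 * (yk + X)) ≤ |yk - X| * 1 :=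
            mul_le_mul_of_nonneg_left ht1 (abs_nonneg _)
        _ = |yk - X| := mul_one _
        _ ≤ (k:ℝ) * (μ ^ 2 / 4 + c) * H ^ 3 := ih
    have hB : |μ ^ 2 / 4 * yk ^ 2 * yk1| ≤ μ ^ 2 / 4 * H ^ 3 := by
      have h1 : μ ^ 2 / 4 * yk ^ 2 * yk1 ≤ 0 :=
        mul_nonpos_of_nonneg_of_nonpos (by positivity) hY1.2
      rw [abs_of_nonpos h1]
      have ha : yk ^ 2 ≤ H ^ 2 := by nlinarith [hY.1, hY.2, hH0]
      have h2 : yk ^ 2 * -yk1 ≤ H ^ 2 * H :=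
        mul_le_mul ha (by linarith [hY1.1]) (by linarith [hY1.2]) (by positivity)
      calc -(μ ^ 2 / 4 * yk ^ 2 * yk1) = μ ^ 2 / 4 * (yk ^ 2 * -yk1) := by ring
        _ ≤ μ ^ 2 / 4 * (H ^ 2 * H) := mul_le_mul_of_nonneg_left h2 (by positivity)
        _ = μ ^ 2 / 4 * H ^ 3 := by ring
    have hC : |f X - X - μ / 2 * X ^ 2| ≤ c * H ^ 3 := by
      have hXa : |X| ≤ H := by
        rw [abs_of_nonpos hX.2]; linarith [hX.1]
      have h3 : |X| ^ 3 ≤ H ^ 3 := pow_le_pow_left₀ (abs_nonneg _) hXa 3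
      calc |f X - X - μ / 2 * X ^ 2| ≤ c * |X| ^ 3 := htaylor X hX.2
        _ ≤ c * H ^ 3 := mul_le_mul_of_nonneg_left h3 hc.le
    calc |yk1 - f X|
        = |(yk - X) * (1 + μ / 2 * (yk + X)) + μ ^ 2 / 4 * yk ^ 2 * yk1
            - (f X - X - μ / 2 * X ^ 2)| := by rw [key]
      _ ≤ |(yk - X) * (1 + μ / 2 * (yk + X)) + μ ^ 2 / 4 * yk ^ 2 * yk1|
            + |f X - X - μ / 2 * X ^ 2| := abs_sub _ _
      _ ≤ (|(yk - X) * (1 + μ / 2 * (yk + X))| + |μ ^ 2 / 4 * yk ^ 2 * yk1|)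
            + |f X - X - μ / 2 * X ^ 2| := by
          gcongr
          exact abs_add_le _ _
      _ ≤ (k:ℝ) * (μ ^ 2 / 4 + c) * H ^ 3 + μ ^ 2 / 4 * H ^ 3 + c * H ^ 3 := by
          linarith [hA, hB, hC]
      _ = ((k:ℕ) + 1 : ℕ) * (μ ^ 2 / 4 + c) * H ^ 3 := by push_cast; ring
end

section
/- For any probability vector p on {0,…,D} with mean 1 and the iteration f(s) = ln(∑ p_i e^{si}), the Laplace transforms L_n(x/n) converge, for every fixed x ≤ 0, to 1/(1 − μx/2)² as n → ∞, where μ = ∑ i²p_i − 1 > 0 and L_n(s) = ∏_{k=0}^{n−1} f'(f^{∘k}(s)) · e^{f^{∘n}(s)}. -/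
/-!
Put `g n z = n * (exp (f^[n] (z / n)) - 1)`. By the chain rule its derivative at `x` is
`L n (x / n)`, and `g n` is convex because `exp ∘ f = P ∘ exp` for the generating polynomial
`P t = ∑ p i * t ^ i`, which is convex and increasing on `[0, ∞)`. Since
`f s = s + μ s² / 2 + o(s²)`, the increment `1 / s - 1 / f s` tends to `μ / 2` as `s → 0⁻`; the
orbit of `z / n` under `f` increases towards `0`, so telescoping along it gives
`(n * f^[n] (z / n))⁻¹ → 1 / z - μ / 2` and hence `g n z → z / (1 - μ z / 2)` for `z < 0`.
Convex functions converging pointwise to a differentiable limit have converging derivatives,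
which yields `L n (x / n) → 1 / (1 - μ x / 2) ^ 2`.
-/

open Real Finset Filter Set Topology

theorem tendsto_of_hasDerivAt_of_convexOn {ι : Type*} {l : Filter ι} {g : ι → ℝ → ℝ}
    {g' : ι → ℝ} {G : ℝ → ℝ} {G' x₀ : ℝ} {s : Set ℝ} (hs : s ∈ 𝓝 x₀)
    (hconv : ∀ᶠ n in l, ConvexOn ℝ s (g n)) (hder : ∀ᶠ n in l, HasDerivAt (g n) (g' n) x₀)
    (hlim : ∀ᶠ x in 𝓝 x₀, Tendsto (fun n => g n x) l (𝓝 (G x))) (hG : HasDerivAt G G' x₀) :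
    Tendsto g' l (𝓝 G') := by
  have hslope : ∀ y, Tendsto (fun n => g n y) l (𝓝 (G y)) →
      Tendsto (fun n => slope (g n) x₀ y) l (𝓝 (slope G x₀ y)) := fun y hy => by
    simp only [slope_def_field]
    exact ((hy.sub hlim.self_of_nhds).div_const _)
  have hgood : ∀ᶠ y in 𝓝 x₀, y ∈ s ∧ Tendsto (fun n => g n y) l (𝓝 (G y)) :=
    Filter.Eventually.and hs hlim
  have hG' := hasDerivAt_iff_tendsto_slope.1 hG
  -- `g' n` lies between chord slopes of `g n` at `x₀`, which converge to chord slopes of `G`.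
  rw [tendsto_order]
  constructor
  · intro a ha
    obtain ⟨y, ⟨hay, hys, hy⟩, hyx⟩ := (((hG'.mono_left (nhdsLT_le_nhdsNE x₀)).eventually
      (lt_mem_nhds ha)).and (nhdsWithin_le_nhds hgood)).and self_mem_nhdsWithin |>.exists
    filter_upwards [hconv, hder, (hslope y hy).eventually (lt_mem_nhds hay)] with n hc hd hn
    rw [slope_comm] at hn
    exact hn.trans_le (hc.slope_le_of_hasDerivAt hys (mem_of_mem_nhds hs) hyx hd)
  · intro a ha
    obtain ⟨y, ⟨hay, hys, hy⟩, hyx⟩ := (((hG'.mono_left (nhdsGT_le_nhdsNE x₀)).eventually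
      (gt_mem_nhds ha)).and (nhdsWithin_le_nhds hgood)).and self_mem_nhdsWithin |>.exists
    filter_upwards [hconv, hder, (hslope y hy).eventually (gt_mem_nhds hay)] with n hc hd hn
    exact (hc.le_slope_of_hasDerivAt (mem_of_mem_nhds hs) hys hyx hd).trans_lt hn

theorem convexOn_sum_mul_pow {ι : Type*} (s : Finset ι) {c : ι → ℝ} (hc : ∀ i ∈ s, 0 ≤ c i)
    (e : ι → ℕ) : ConvexOn ℝ (Ici 0) (fun t => ∑ i ∈ s, c i * t ^ e i) := by
  have h := Finset.sum_induction (fun i t => c i * t ^ e i) (ConvexOn ℝ (Ici (0 : ℝ)))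
    (fun _ _ => ConvexOn.add) (convexOn_const 0 (convex_Ici 0))
    fun i hi => by simpa [smul_eq_mul] using (convexOn_pow (e i)).smul (hc i hi)
  simpa [Finset.sum_fn] using h

theorem monotoneOn_sum_mul_pow {ι : Type*} (s : Finset ι) {c : ι → ℝ} (hc : ∀ i ∈ s, 0 ≤ c i)
    (e : ι → ℕ) : MonotoneOn (fun t => ∑ i ∈ s, c i * t ^ e i) (Ici 0) :=
  fun _ ha _ _ hab => sum_le_sum fun i hi =>
    mul_le_mul_of_nonneg_left (pow_le_pow_left₀ ha hab _) (hc i hi)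

theorem convexOn_exp_iterate {f P : ℝ → ℝ} (hPc : ConvexOn ℝ (Ici 0) P)
    (hPm : MonotoneOn P (Ici 0)) (hfP : ∀ s, exp (f s) = P (exp s)) (n : ℕ) :
    ConvexOn ℝ univ (fun s => exp (f^[n] s)) := by
  induction n with
  | zero => simpa using convexOn_exp
  | succ n ih =>
    simp only [Function.iterate_succ_apply', hfP]
    refine ⟨convex_univ, fun x _ y _ a b ha hb hab => ?_⟩
    have hx := (exp_pos (f^[n] x)).le
    have hy := (exp_pos (f^[n] y)).le
    exact (hPm (exp_pos _).le (mem_Ici.2 (by positivity)) (ih.2 trivial trivial ha hb hab)).trans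
      (hPc.2 hx hy ha hb hab)

theorem ConvexOn.const_mul_comp_div {g : ℝ → ℝ} (hg : ConvexOn ℝ univ g) {c : ℝ} (hc : 0 ≤ c) :
    ConvexOn ℝ univ (fun z => c * g (z / c)) := by
  refine ⟨convex_univ, fun x _ y _ a b ha hb hab => ?_⟩
  have h := hg.2 (mem_univ (x / c)) (mem_univ (y / c)) ha hb hab
  simp only [smul_eq_mul] at h ⊢
  rw [show (a * x + b * y) / c = a * (x / c) + b * (y / c) by ring]
  nlinarith [mul_le_mul_of_nonneg_left h hc]

theorem hasDerivAt_iterate_prod {f f' : ℝ → ℝ} (hf : ∀ s, HasDerivAt f (f' s) s) (n : ℕ) (s : ℝ) :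
    HasDerivAt f^[n] (∏ k ∈ range n, f' (f^[k] s)) s := by
  induction n with
  | zero => simpa using hasDerivAt_id s
  | succ n ih =>
    rw [Function.iterate_succ', prod_range_succ, mul_comm]
    exact (hf (f^[n] s)).comp s ih

theorem hasDerivAt_natCast_mul_exp_iterate_div_sub_one {f φ : ℝ → ℝ}
    (hf : ∀ s, HasDerivAt f (φ s) s) {n : ℕ} (hn : n ≠ 0) (x : ℝ) :
    HasDerivAt (fun z => n * (exp (f^[n] (z / n)) - 1))
      ((∏ k ∈ range n, φ (f^[k] (x / n))) * exp (f^[n] (x / n))) x := by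
  have h := ((((hasDerivAt_iterate_prod hf n (x / n)).comp x
    ((hasDerivAt_id x).div_const n)).exp).sub_const 1).const_mul (n : ℝ)
  refine h.congr_deriv ?_
  simp only [Function.comp_apply, id]
  field_simp

theorem hasDerivAt_div_one_sub_mul {a x : ℝ} (hx : 1 - a * x ≠ 0) :
    HasDerivAt (fun z => z / (1 - a * z)) (1 / (1 - a * x) ^ 2) x := by
  refine ((hasDerivAt_id x).div (((hasDerivAt_id x).const_mul a).const_sub 1) hx).congr_deriv ?_
  simp only [id]
  field_simp
  ring

theorem tendsto_inv_sub_inv_of_hasDerivAt {f f' : ℝ → ℝ} {c : ℝ}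
    (hf : ∀ᶠ s in 𝓝 0, HasDerivAt f (f' s) s) (hf0 : f 0 = 0) (hf'0 : f' 0 = 1)
    (hf' : HasDerivAt f' c 0) :
    Tendsto (fun s => s⁻¹ - (f s)⁻¹) (𝓝[≠] 0) (𝓝 (c / 2)) := by
  have hquad : Tendsto (fun s => (f s - s) / s ^ 2) (𝓝[≠] 0) (𝓝 (c / 2)) := by
    refine HasDerivAt.lhopital_zero_nhdsNE (f' := fun s => f' s - 1) (g' := fun s => 2 * s)
      (eventually_nhdsWithin_of_eventually_nhds (hf.mono fun s hs => hs.sub (hasDerivAt_id s)))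
      (Eventually.of_forall fun s => by simpa using hasDerivAt_pow 2 s)
      (eventually_mem_nhdsWithin.mono fun s hs => mul_ne_zero two_ne_zero hs) ?_ ?_ ?_
    · have : Tendsto (fun s => f s - s) (𝓝 0) (𝓝 (f 0 - 0)) :=
        hf.self_of_nhds.continuousAt.tendsto.sub tendsto_id
      simpa [hf0] using this.mono_left nhdsWithin_le_nhds
    · have := ((continuous_pow 2).tendsto (0 : ℝ)).mono_left (nhdsWithin_le_nhds (s := {0}ᶜ))
      simpa using this
    · refine ((hasDerivAt_iff_tendsto_slope.1 hf').div_const 2).congr' ?_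
      filter_upwards [self_mem_nhdsWithin] with s hs
      rw [slope_def_field, hf'0, sub_zero]
      field_simp
  have hlin : Tendsto (fun s => f s / s) (𝓝[≠] 0) (𝓝 1) := by
    have hslope : slope f 0 = fun s => f s / s := funext fun s => by simp [slope_def_field, hf0]
    exact hslope ▸ hasDerivAt_iff_tendsto_slope.1 (hf'0 ▸ hf.self_of_nhds)
  have hne : ∀ᶠ s in 𝓝[≠] 0, f s ≠ 0 ∧ s ≠ 0 :=
    ((hlin.eventually_ne one_ne_zero).and self_mem_nhdsWithin).mono fun s hs =>
      ⟨fun h => hs.1 (by simp [h]), hs.2⟩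
  have hlim := hquad.div hlin one_ne_zero
  rw [div_one] at hlim
  refine hlim.congr' ?_
  filter_upwards [hne] with s ⟨hfs, hs⟩
  simp only [Pi.div_apply]
  field_simp

section Orbits

variable {f : ℝ → ℝ} (horbit : ∀ s < 0, s < f s ∧ f s < 0)
include horbit

theorem eventually_forall_iterate_nhdsLT {P : ℝ → Prop} (hP : ∀ᶠ s in 𝓝[<] 0, P s) :
    ∀ᶠ t in 𝓝[<] 0, ∀ k, P (f^[k] t) := by
  obtain ⟨η, hη, hsub⟩ := mem_nhdsLT_iff_exists_Ioo_subset.1 hP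
  have hmaps : MapsTo f (Ioo η 0) (Ioo η 0) := fun s hs =>
    ⟨hs.1.trans (horbit s hs.2).1, (horbit s hs.2).2⟩
  filter_upwards [Ioo_mem_nhdsLT hη] with t ht k using hsub (hmaps.iterate k ht)

theorem nonneg_of_tendsto_inv_sub_inv {a : ℝ}
    (hg : Tendsto (fun s => s⁻¹ - (f s)⁻¹) (𝓝[<] 0) (𝓝 a)) : 0 ≤ a := by
  refine ge_of_tendsto hg (eventually_nhdsWithin_of_forall fun s (hs : s < 0) => ?_)
  exact sub_nonneg.2 ((inv_lt_inv_of_neg (horbit s hs).2 hs).2 (horbit s hs).1).le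

theorem tendsto_inv_iterate_div {a y : ℝ} (hg : Tendsto (fun s => s⁻¹ - (f s)⁻¹) (𝓝[<] 0) (𝓝 a))
    (hy : y < 0) : Tendsto (fun n : ℕ => (f^[n] (y / n))⁻¹ / n) atTop (𝓝 (y⁻¹ - a)) := by
  rw [Metric.tendsto_nhds]
  intro ε hε
  have hyn : Tendsto (fun n : ℕ => y / n) atTop (𝓝[<] 0) := by
    refine tendsto_nhdsWithin_iff.2 ⟨tendsto_const_div_atTop_nhds_zero_nat y, ?_⟩
    filter_upwards [eventually_gt_atTop 0] with n hn
    exact div_neg_of_neg_of_pos hy (Nat.cast_pos.2 hn)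
  have hclose := eventually_forall_iterate_nhdsLT horbit
    (hg.eventually (Metric.closedBall_mem_nhds a (half_pos hε)))
  -- Once `y / n` is close to `0`, so is its whole (increasing) orbit, and every increment of
  -- `k ↦ (f^[k] (y / n))⁻¹` is within `ε / 2` of `-a`.
  filter_upwards [hyn.eventually hclose, eventually_gt_atTop 0] with n hn hn0
  have htel : (f^[n] (y / n))⁻¹ / n - (y⁻¹ - a)
      = -(∑ k ∈ range n, ((f^[k] (y / n))⁻¹ - (f (f^[k] (y / n)))⁻¹ - a)) / n := by
    have := Finset.sum_range_sub' (fun k => (f^[k] (y / n))⁻¹) n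
    simp only [Function.iterate_succ_apply', Function.iterate_zero_apply] at this
    rw [Finset.sum_sub_distrib, this, sum_const, card_range, nsmul_eq_mul]
    field_simp
    ring
  have hsum : ‖∑ k ∈ range n, ((f^[k] (y / n))⁻¹ - (f (f^[k] (y / n)))⁻¹ - a)‖ ≤ n * (ε / 2) := by
    simpa using norm_sum_le_of_le (range n) fun k _ => (dist_eq_norm _ a).symm.trans_le (hn k)
  rw [dist_eq_norm, htel, norm_div, norm_neg, Real.norm_natCast, div_lt_iff₀ (by positivity)]
  have : (0 : ℝ) < n := Nat.cast_pos.2 hn0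
  nlinarith

theorem tendsto_natCast_mul_exp_iterate_sub_one {a y : ℝ}
    (hg : Tendsto (fun s => s⁻¹ - (f s)⁻¹) (𝓝[<] 0) (𝓝 a)) (hy : y < 0) :
    Tendsto (fun n : ℕ => n * (exp (f^[n] (y / n)) - 1)) atTop (𝓝 (y / (1 - a * y))) := by
  have hc : y⁻¹ - a < 0 := by
    linarith [inv_lt_zero.2 hy, nonneg_of_tendsto_inv_sub_inv horbit hg]
  have hmul : Tendsto (fun n : ℕ => n * f^[n] (y / n)) atTop (𝓝 (y⁻¹ - a)⁻¹) :=
    ((tendsto_inv_iterate_div horbit hg hy).inv₀ hc.ne).congr fun n => by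
      rw [inv_div, div_inv_eq_mul]
  have hneg : ∀ n : ℕ, 0 < n → f^[n] (y / n) < 0 := fun n hn =>
    MapsTo.iterate (fun s (hs : s < 0) => (horbit s hs).2) n
      (div_neg_of_neg_of_pos hy (Nat.cast_pos.2 hn))
  have hzero : Tendsto (fun n : ℕ => f^[n] (y / n)) atTop (𝓝[≠] 0) := by
    refine tendsto_nhdsWithin_iff.2 ⟨?_, ?_⟩
    · refine (hmul.div_atTop tendsto_natCast_atTop_atTop).congr' ?_
      filter_upwards [eventually_gt_atTop 0] with n hn
      field_simp
    · filter_upwards [eventually_gt_atTop 0] with n hn using (hneg n hn).ne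
  have hexp : Tendsto (slope exp 0) (𝓝[≠] 0) (𝓝 1) := by
    simpa using hasDerivAt_iff_tendsto_slope.1 (hasDerivAt_exp 0)
  convert (hmul.mul (hexp.comp hzero)).congr' ?_ using 2
  · rw [mul_one, show y⁻¹ - a = (1 - a * y) / y by field_simp [hy.ne], inv_div]
  · filter_upwards [eventually_gt_atTop 0] with n hn
    simp only [Function.comp_apply, slope_def_field, exp_zero, sub_zero]
    field_simp [(hneg n hn).ne]

theorem tendsto_prod_deriv_iterate_mul_exp_iterate {φ : ℝ → ℝ} {c x : ℝ}
    (hfφ : ∀ s, HasDerivAt f (φ s) s) (hf0 : f 0 = 0) (hφ0 : φ 0 = 1) (hφ' : HasDerivAt φ c 0)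
    (hconv : ∀ n, ConvexOn ℝ univ (fun s => exp (f^[n] s))) (hx : x < 0) :
    Tendsto (fun n : ℕ => (∏ k ∈ range n, φ (f^[k] (x / n))) * exp (f^[n] (x / n))) atTop
      (𝓝 (1 / (1 - c / 2 * x) ^ 2)) := by
  have hinv := (tendsto_inv_sub_inv_of_hasDerivAt (.of_forall hfφ) hf0 hφ0 hφ').mono_left
    (nhdsLT_le_nhdsNE 0)
  have hden : 1 - c / 2 * x ≠ 0 := by nlinarith [nonneg_of_tendsto_inv_sub_inv horbit hinv]
  refine tendsto_of_hasDerivAt_of_convexOn univ_mem (.of_forall fun n => ?_)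
    ((eventually_ne_atTop 0).mono fun n hn =>
      hasDerivAt_natCast_mul_exp_iterate_div_sub_one hfφ hn x) ?_ (hasDerivAt_div_one_sub_mul hden)
  · refine (((hconv n).const_mul_comp_div n.cast_nonneg).add_const (-n)).congr fun z _ => ?_
    simp only [Pi.add_apply]
    ring
  · filter_upwards [Iio_mem_nhds hx] with z hz
    exact tendsto_natCast_mul_exp_iterate_sub_one horbit hinv hz

end Orbits

section ExpMoment

variable {D : ℕ} (p : Fin (D + 1) → ℝ)

noncomputable def expMoment (m : ℕ) (s : ℝ) : ℝ := ∑ i, p i * (i.1 : ℝ) ^ m * exp (s * i.1)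

theorem hasDerivAt_expMoment (m : ℕ) (s : ℝ) :
    HasDerivAt (expMoment p m) (expMoment p (m + 1) s) s := by
  have h := HasDerivAt.fun_sum fun (i : Fin (D + 1)) (_ : i ∈ Finset.univ) =>
    (((hasDerivAt_id s).mul_const (i.1 : ℝ)).exp.const_mul (p i * (i.1 : ℝ) ^ m))
  refine h.congr_deriv (sum_congr rfl fun i _ => ?_)
  simp only [id, one_mul]
  ring

theorem expMoment_at_zero (m : ℕ) : expMoment p m 0 = ∑ i, p i * (i.1 : ℝ) ^ m := by
  simp [expMoment]

variable {p}

theorem expMoment_zero_pos (hpos : ∀ i, 0 < p i) (s : ℝ) : 0 < expMoment p 0 s :=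
  sum_pos (fun i _ => by simpa using mul_pos (hpos i) (exp_pos _)) univ_nonempty

theorem hasDerivAt_log_expMoment (hpos : ∀ i, 0 < p i) (s : ℝ) :
    HasDerivAt (fun s => log (expMoment p 0 s)) (expMoment p 1 s / expMoment p 0 s) s :=
  (hasDerivAt_expMoment p 0 s).log (expMoment_zero_pos hpos s).ne'

theorem expMoment_zero_at_zero (hsum : ∑ i, p i = 1) : expMoment p 0 0 = 1 := by
  simpa [expMoment_at_zero] using hsum

theorem expMoment_one_at_zero (hmean : ∑ i, (i.1 : ℝ) * p i = 1) : expMoment p 1 0 = 1 := by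
  simpa [expMoment_at_zero, mul_comm] using hmean

theorem hasDerivAt_expMoment_div_at_zero (hpos : ∀ i, 0 < p i) (hsum : ∑ i, p i = 1)
    (hmean : ∑ i, (i.1 : ℝ) * p i = 1) :
    HasDerivAt (fun s => expMoment p 1 s / expMoment p 0 s) (∑ i, (i.1 : ℝ) ^ 2 * p i - 1) 0 := by
  refine ((hasDerivAt_expMoment p 1 0).div (hasDerivAt_expMoment p 0 0)
    (expMoment_zero_pos hpos 0).ne').congr_deriv ?_
  rw [expMoment_zero_at_zero hsum, expMoment_one_at_zero hmean, expMoment_at_zero]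
  simp [mul_comm]

theorem exp_log_expMoment (hpos : ∀ i, 0 < p i) (s : ℝ) :
    exp (log (expMoment p 0 s)) = ∑ i, p i * exp s ^ i.1 := by
  rw [exp_log (expMoment_zero_pos hpos s)]
  simp [expMoment, ← exp_nat_mul, mul_comm]

theorem lt_log_expMoment (hD : 1 ≤ D) (hpos : ∀ i, 0 < p i) (hsum : ∑ i, p i = 1)
    (hmean : ∑ i, (i.1 : ℝ) * p i = 1) {s : ℝ} (hs : s ≠ 0) : s < log (expMoment p 0 s) := by
  rw [lt_log_iff_exp_lt (expMoment_zero_pos hpos s)]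
  have hjensen := strictConvexOn_exp.map_sum_lt (t := univ) (w := p) (p := fun i => s * i.1)
    (fun i _ => hpos i) hsum (fun _ _ => mem_univ _)
    ⟨0, mem_univ _, ⟨1, by omega⟩, mem_univ _, by simpa using hs.symm⟩
  have hcentre : ∑ i, p i * (s * i.1) = s := by
    simp_rw [mul_left_comm, ← mul_sum, mul_comm (p _), hmean, mul_one]
  simpa [hcentre, expMoment] using hjensen

theorem log_expMoment_neg (hD : 1 ≤ D) (hpos : ∀ i, 0 < p i) (hsum : ∑ i, p i = 1) {s : ℝ}
    (hs : s < 0) : log (expMoment p 0 s) < 0 := by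
  refine log_neg (expMoment_zero_pos hpos s) (hsum ▸ sum_lt_sum (fun i _ => ?_) ?_)
  · simpa using mul_le_of_le_one_right (hpos i).le
      (exp_le_one_iff.2 (mul_nonpos_of_nonpos_of_nonneg hs.le (Nat.cast_nonneg _)))
  · refine ⟨⟨1, by omega⟩, mem_univ _, ?_⟩
    simpa using mul_lt_of_lt_one_right (hpos _) (exp_lt_one_iff.2 hs)

end ExpMoment

theorem laplace_transform_convergence_general
    (D : ℕ) (hD : 2 ≤ D) (p : Fin (D + 1) → ℝ)
    (hpos : ∀ i, 0 < p i)
    (hsum : ∑ i, p i = 1)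
    (hmean : ∑ i, (i.1 : ℝ) * p i = 1)
    (μ : ℝ) (hμ : μ = (∑ i, (i.1 : ℝ) ^ 2 * p i) - 1)
    (f : ℝ → ℝ)
    (hf : ∀ s, f s = Real.log (∑ i : Fin (D + 1), p i * Real.exp (s * i.1)))
    (L : ℕ → ℝ → ℝ)
    (hL : ∀ n s, L n s =
      (∏ k ∈ Finset.range n, deriv f (f^[k] s)) * Real.exp (f^[n] s)) :
    ∀ x ≤ (0 : ℝ),
      Tendsto (fun n : ℕ => L n (x / n)) atTop
        (nhds (1 / (1 - μ * x / 2) ^ 2)) := by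
  intro x hx
  have hfM : f = fun s => log (expMoment p 0 s) := funext fun s => by simp [hf, expMoment]
  have hfφ : ∀ s, HasDerivAt f (expMoment p 1 s / expMoment p 0 s) s := by
    rw [hfM]; exact hasDerivAt_log_expMoment hpos
  have hM0 := expMoment_zero_at_zero hsum
  have hM1 := expMoment_one_at_zero hmean
  have hf0 : f 0 = 0 := by simp [hfM, hM0]
  have hL' : ∀ n s, L n s =
      (∏ k ∈ range n, expMoment p 1 (f^[k] s) / expMoment p 0 (f^[k] s)) * exp (f^[n] s) :=
    fun n s => by simp only [hL, (hfφ _).deriv]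
  rcases hx.lt_or_eq with hx | rfl
  · have horbit : ∀ s < 0, s < f s ∧ f s < 0 := fun s hs => by
      rw [hfM]
      exact ⟨lt_log_expMoment (by omega) hpos hsum hmean hs.ne,
        log_expMoment_neg (by omega) hpos hsum hs⟩
    have hconv : ∀ n, ConvexOn ℝ univ (fun s => exp (f^[n] s)) :=
      convexOn_exp_iterate (convexOn_sum_mul_pow _ (fun i _ => (hpos i).le) _)
        (monotoneOn_sum_mul_pow _ (fun i _ => (hpos i).le) _)
        (by rw [hfM]; exact exp_log_expMoment hpos)
    simp_rw [hL', ← div_mul_eq_mul_div μ 2 x, hμ]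
    exact tendsto_prod_deriv_iterate_mul_exp_iterate
      (φ := fun s => expMoment p 1 s / expMoment p 0 s) horbit hfφ hf0 (by simp [hM0, hM1])
      (hasDerivAt_expMoment_div_at_zero hpos hsum hmean) hconv hx
  · simp [hL', Function.iterate_fixed hf0, hM0, hM1]

/-- For a positive probability vector p on {0,…,D} with mean 1,
f(s) = ln(∑ p_i e^{si}), μ = ∑ i²p_i − 1 > 0, and
L_n(s) = ∏_{k=0}^{n−1} f'(f^∘k(s)) · e^{f^∘n(s)}, one has
L_n(x/n) → 1/(1 − μx/2)² as n → ∞, for every fixed x ≤ 0. -/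
theorem laplace_transform_convergence
    (D : ℕ) (hD : 2 ≤ D) (p : Fin (D + 1) → ℝ)
    (hpos : ∀ i, 0 < p i)
    (hsum : ∑ i, p i = 1)
    (hmean : ∑ i, (i.1 : ℝ) * p i = 1)
    (μ : ℝ) (hμ : μ = (∑ i, (i.1 : ℝ) ^ 2 * p i) - 1) (hμpos : 0 < μ)
    (f : ℝ → ℝ)
    (hf : ∀ s, f s = Real.log (∑ i : Fin (D + 1), p i * Real.exp (s * i.1)))
    (L : ℕ → ℝ → ℝ)
    (hL : ∀ n s, L n s =
      (∏ k ∈ Finset.range n, deriv f (f^[k] s)) * Real.exp (f^[n] s)) :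
    ∀ x ≤ (0 : ℝ),
      Tendsto (fun n : ℕ => L n (x / n)) atTop
        (nhds (1 / (1 - μ * x / 2) ^ 2)) :=
  laplace_transform_convergence_general D hD p hpos hsum hmean μ hμ f hf L hL
end
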